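/- arXiv:1111.3469 — 5 statements merged into one kernel-verified Lean document; each statement's English description precedes it below -/
import Mathlib

section
/- If H is a normal subgroup of a finite group G, then H is expansive in G; more generally, if the normalizer N_G(H) is normal in G, then H is expansive in G. -/
/-- `H ^ g = g⁻¹ H g`, the conjugate of `H` by `g`. -/
def conjSub {G : Type*} [Group G] (H : Subgroup G) (g : G) : Subgroup G :=
  Subgroup.map (MulAut.conj g⁻¹).toMonoidHom H

/-- A subgroup `H` of `G` is *expansive* if for every `g ∈ G \ N_G(H)`, the
intersection over `n ∈ N_G(H)` of the subgroups `(H^{gn} ∩ N_G(H))·H` strictly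
contains `H`. -/
def IsExpansive {G : Type*} [Group G] (H : Subgroup G) : Prop :=
  ∀ g : G, g ∉ (Subgroup.normalizer (H : Set G)) →
    H < ⨅ n ∈ (Subgroup.normalizer (H : Set G)), (conjSub H (g * n) ⊓ (Subgroup.normalizer (H : Set G))) ⊔ H

/-! If `N_G(H)` is normal, then `H^g ≤ N_G(H^g) = N_G(H)^g = N_G(H)`, so every `n ∈ N_G(H)`
normalizes `H^g` and all the subgroups `(H^{gn} ∩ N_G(H))·H` equal `H^g H`. For `g ∉ N_G(H)`
this contains `H` strictly, since `H^g ≤ H` would force `H^g = H` by counting. -/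

namespace conjSub

variable {G : Type*} [Group G] {H : Subgroup G} {g n x : G}

theorem mem_iff : x ∈ conjSub H g ↔ g * x * g⁻¹ ∈ H := by
  constructor
  · rintro ⟨h, hh, rfl⟩
    simpa [mul_assoc] using hh
  · intro hx
    exact ⟨g * x * g⁻¹, hx, by simp [mul_assoc]⟩

theorem mul (H : Subgroup G) (g n : G) : conjSub H (g * n) = conjSub (conjSub H g) n := by
  ext x
  simp only [mem_iff, mul_inv_rev, mul_assoc]

theorem eq_self_iff : conjSub H g = H ↔ g ∈ Subgroup.normalizer (H : Set G) := by
  rw [Subgroup.mem_normalizer_iff, SetLike.ext_iff]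
  simp only [mem_iff, Iff.comm]

theorem eq_self_of_normal (hN : H.Normal) (g : G) : conjSub H g = H :=
  eq_self_iff.mpr (by simp [Subgroup.normalizer_eq_top_iff.mpr hN])

theorem normalizer_eq (H : Subgroup G) (g : G) :
    Subgroup.normalizer (conjSub H g : Set G) = conjSub (Subgroup.normalizer (H : Set G)) g :=
  (Subgroup.map_equiv_normalizer_eq H (MulAut.conj g⁻¹)).symm

theorem card_eq (H : Subgroup G) (g : G) : Nat.card (conjSub H g) = Nat.card H :=
  Subgroup.card_map_of_injective (MulAut.conj g⁻¹).injective

theorem mem_normalizer_of_le [Finite H] (hle : conjSub H g ≤ H) :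
    g ∈ Subgroup.normalizer (H : Set G) :=
  eq_self_iff.mp (Subgroup.eq_of_le_of_card_ge hle (card_eq H g).ge)

theorem normalizer_eq_of_normalizer_normal (hN : (Subgroup.normalizer (H : Set G)).Normal)
    (g : G) :
    Subgroup.normalizer (conjSub H g : Set G) = Subgroup.normalizer (H : Set G) := by
  rw [normalizer_eq, eq_self_of_normal hN]

theorem le_normalizer_of_normalizer_normal (hN : (Subgroup.normalizer (H : Set G)).Normal)
    (g : G) :
    conjSub H g ≤ Subgroup.normalizer (H : Set G) :=
  normalizer_eq_of_normalizer_normal hN g ▸ Subgroup.le_normalizer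

theorem mul_eq_of_normalizer_normal (hN : (Subgroup.normalizer (H : Set G)).Normal)
    (hn : n ∈ Subgroup.normalizer (H : Set G)) :
    conjSub H (g * n) = conjSub H g := by
  rwa [mul, eq_self_iff, normalizer_eq_of_normalizer_normal hN]

end conjSub

theorem IsExpansive.of_normalizer_normal {G : Type*} [Group G] {H : Subgroup G} [Finite H]
    (hN : (Subgroup.normalizer (H : Set G)).Normal) : IsExpansive H := by
  intro g hg
  have hlt : H < conjSub H g ⊔ H :=
    right_lt_sup.mpr fun hle => hg (conjSub.mem_normalizer_of_le hle)
  refine hlt.trans_le (le_iInf₂ fun n hn => ?_)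
  rw [conjSub.mul_eq_of_normalizer_normal hN hn,
    inf_eq_left.mpr (conjSub.le_normalizer_of_normalizer_normal hN g)]

theorem IsExpansive.of_normal {G : Type*} [Group G] {H : Subgroup G} (hH : H.Normal) :
    IsExpansive H := fun _ hg =>
  absurd (by simp [Subgroup.normalizer_eq_top_iff.mpr hH]) hg

/-- If `H ⊴ G` then `H` is expansive in `G`; more generally, if `N_G(H) ⊴ G`
then `H` is expansive in `G`. -/
theorem expansive_of_normal_or_normalizer_normal
    {G : Type*} [Group G] [Finite G] (H : Subgroup G) :
    (H.Normal → IsExpansive H) ∧ ((Subgroup.normalizer (H : Set G)).Normal → IsExpansive H) :=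
  ⟨.of_normal, .of_normalizer_normal⟩
end

section
/- Let P be a finite p-group with [P,P] ≤ Z(P). Then the diagonal subgroup Δ(P) is expansive in P × P. -/
/-- `Z_G(Q)`: the subgroup of `N_G(Q)` containing `Q` with
`Z_G(Q)/Q = Z(N_G(Q)/Q)`. -/
def Zsub {G : Type*} [Group G] (Q : Subgroup G) : Subgroup G :=
  Subgroup.map (Subgroup.normalizer (Q : Set G)).subtype
    (Subgroup.comap (QuotientGroup.mk' (Q.subgroupOf (Subgroup.normalizer (Q : Set G))))
      (Subgroup.center ((Subgroup.normalizer (Q : Set G)) ⧸ Q.subgroupOf (Subgroup.normalizer (Q : Set G)))))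

/-- `Q` is expansive in the finite `p`-group `G`:
for all `g`, `Q^g ∩ Z_G(Q) ≤ Q` implies `Q^g = Q`. -/
def IsExpansiveP {G : Type*} [Group G] (Q : Subgroup G) : Prop :=
  ∀ g : G, conjSub Q g ⊓ Zsub Q ≤ Q → conjSub Q g = Q

/-- The diagonal subgroup of `P × P`. -/
def diagSubgroup (P : Type*) [Group P] : Subgroup (P × P) :=
  ((MonoidHom.id P).prod (MonoidHom.id P)).range

/-!
Pairs `(a, b)` normalize `Δ(P)` exactly when `a ≡ b` modulo `Z(P)`, and commutators only depend
on their arguments modulo the centre, so `N(Δ)/Δ` is abelian and `Z_{P×P}(Δ) = N(Δ)`. When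
`[P, P] ≤ Z(P)`, conjugation acts trivially on `P/Z(P)`, hence for every `x` the pair
`(g⁻¹xg, k⁻¹xk)` lies in `Δ^(g,k) ∩ N(Δ)`. If that intersection is contained in `Δ`, then `g`
and `k` induce the same inner automorphism, i.e. `(g, k)` normalizes `Δ`, and `Δ^(g,k) = Δ`.
-/

open Subgroup
open scoped commutatorElement

section conjSub

variable {G : Type*} [Group G] {Q : Subgroup G}

theorem inv_mul_mul_mem_conjSub {x : G} (hx : x ∈ Q) (g : G) : g⁻¹ * x * g ∈ conjSub Q g :=
  ⟨x, hx, by simp⟩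

theorem conjSub_eq_self_of_mem_normalizer {g : G} (hg : g ∈ normalizer (Q : Set G)) :
    conjSub Q g = Q :=
  mem_normalizer_iff_map_conj_eq.mp (inv_mem hg)

theorem normalizer_le_Zsub
    (hQ : ∀ a ∈ normalizer (Q : Set G), ∀ b ∈ normalizer (Q : Set G), ⁅a, b⁆ ∈ Q) :
    normalizer (Q : Set G) ≤ Zsub Q := by
  intro x hx
  refine ⟨⟨x, hx⟩, mem_center_iff.mpr fun q => ?_, rfl⟩
  induction q using QuotientGroup.induction_on with
  | H n =>
    rw [QuotientGroup.mk'_apply, ← QuotientGroup.mk_mul, ← QuotientGroup.mk_mul, QuotientGroup.eq,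
      mem_subgroupOf]
    simpa [commutatorElement_def, mul_assoc] using hQ _ (inv_mem hx) _ (inv_mem n.2)

end conjSub

section center

variable {G : Type*} [Group G]

theorem mk_center_eq_mk_iff {a b : G} :
    (a : G ⧸ center G) = b ↔ ∀ x, a * x * a⁻¹ = b * x * b⁻¹ := by
  rw [QuotientGroup.eq, mem_center_iff]
  refine forall_congr' fun x => ⟨fun h => ?_, fun h => ?_⟩
  · calc a * x * a⁻¹ = a * (x * (a⁻¹ * b)) * b⁻¹ := by group
      _ = a * (a⁻¹ * b * x) * b⁻¹ := by rw [h]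
      _ = b * x * b⁻¹ := by group
  · calc x * (a⁻¹ * b) = a⁻¹ * (a * x * a⁻¹) * b := by group
      _ = a⁻¹ * (b * x * b⁻¹) * b := by rw [h]
      _ = a⁻¹ * b * x := by group

theorem commutatorElement_eq_of_mk_center_eq {a b c d : G} (hab : (a : G ⧸ center G) = b)
    (hcd : (c : G ⧸ center G) = d) : ⁅a, c⁆ = ⁅b, d⁆ := by
  obtain ⟨z, hz, rfl⟩ : ∃ z ∈ center G, b = a * z := ⟨_, QuotientGroup.eq.mp hab, by group⟩
  obtain ⟨w, hw, rfl⟩ : ∃ w ∈ center G, d = c * w := ⟨_, QuotientGroup.eq.mp hcd, by group⟩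
  have hz1 : ⁅z, c * w⁆ = 1 :=
    commutatorElement_eq_one_iff_mul_comm.mpr (mem_center_iff.mp hz _).symm
  have hw1 : ⁅a, w⁆ = 1 := commutatorElement_eq_one_iff_mul_comm.mpr (mem_center_iff.mp hw _)
  rw [commutatorElement_mul_left_eq_conj_mul a z, hz1,
    commutatorElement_mul_right_eq_mul_conj a c w, hw1]
  group

theorem mk_center_conj_eq_of_commutator_le_center (h : commutator G ≤ center G) (g x : G) :
    ((g⁻¹ * x * g : G) : G ⧸ center G) = x := by
  have hcomm := (Normal.quotient_commutative_iff_commutator_le).mpr h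
  rw [QuotientGroup.mk_mul, QuotientGroup.mk_mul, hcomm.is_comm.comm _ (g : G ⧸ center G),
    QuotientGroup.mk_inv, mul_inv_cancel_left]

end center

section diagSubgroup

variable {P : Type*} [Group P]

theorem mem_diagSubgroup {a b : P} : (a, b) ∈ diagSubgroup P ↔ a = b := by
  simp [diagSubgroup, Prod.ext_iff]

theorem mem_normalizer_diagSubgroup {a b : P} :
    (a, b) ∈ normalizer (diagSubgroup P : Set (P × P)) ↔ (a : P ⧸ center P) = b := by
  rw [mk_center_eq_mk_iff, mem_normalizer_iff]
  constructor
  · intro h x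
    simpa [mem_diagSubgroup] using (h (x, x)).mp (mem_diagSubgroup.mpr rfl)
  · rintro h ⟨k₁, k₂⟩
    simp [mem_diagSubgroup, h]

theorem normalizer_diagSubgroup_le_Zsub :
    normalizer (diagSubgroup P : Set (P × P)) ≤ Zsub (diagSubgroup P) :=
  normalizer_le_Zsub fun ⟨_, _⟩ hab ⟨_, _⟩ hcd => mem_diagSubgroup.mpr <|
    commutatorElement_eq_of_mk_center_eq (mem_normalizer_diagSubgroup.mp hab)
      (mem_normalizer_diagSubgroup.mp hcd)

end diagSubgroup

theorem diag_expansive_of_commutator_le_center_general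
    (P : Type*) [Group P]
    (h : commutator P ≤ Subgroup.center P) :
    IsExpansiveP (diagSubgroup P) := by
  rintro ⟨g, k⟩ hle
  have hconj : ∀ x : P, g⁻¹ * x * g = k⁻¹ * x * k := fun x => by
    have hN : (g⁻¹ * x * g, k⁻¹ * x * k) ∈ normalizer (diagSubgroup P : Set (P × P)) := by
      rw [mem_normalizer_diagSubgroup, mk_center_conj_eq_of_commutator_le_center h,
        mk_center_conj_eq_of_commutator_le_center h]
    exact mem_diagSubgroup.mp (hle ⟨inv_mul_mul_mem_conjSub (mem_diagSubgroup.mpr rfl) (g, k),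
      normalizer_diagSubgroup_le_Zsub hN⟩)
  have hinv : (g⁻¹, k⁻¹) ∈ normalizer (diagSubgroup P : Set (P × P)) :=
    mem_normalizer_diagSubgroup.mpr (mk_center_eq_mk_iff.mpr (by simpa using hconj))
  exact conjSub_eq_self_of_mem_normalizer (by simpa using inv_mem hinv)

/-- If `P` is a finite `p`-group with `[P,P] ≤ Z(P)`, then the diagonal
`Δ(P)` is expansive in `P × P`. -/
theorem diag_expansive_of_commutator_le_center {p : ℕ} [Fact p.Prime]
    (P : Type*) [Group P] [Finite P] (hP : IsPGroup p P)
    (h : commutator P ≤ Subgroup.center P) :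
    IsExpansiveP (diagSubgroup P) :=
  diag_expansive_of_commutator_le_center_general P h
end

section
/- Let P = Q_8. For every automorphism θ of P there exists u ∈ P such that for all h ∈ P with θ(h)h^{-1} ∈ Z(P), one has θ(h) = u^{-1}hu and θ^{-1}(h) = uhu^{-1}. -/
/-!
Write `S = {h | θ h * h⁻¹ ∈ Z(Q₈)}`. An automorphism of `Q₈` is determined by the images of the
two non-commuting generators `a 1` and `xa 0`, so whether `θ` agrees on `S` with some inner
automorphism `h ↦ u⁻¹ h u` is a finite check over the images of the generators.
The claim for `θ⁻¹` holds in every group: if `θ h = u⁻¹ h u` and `z = θ h * h⁻¹` is central,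
then `u h u⁻¹ = z⁻¹ h` again lies in `S`, and `θ` maps it back to `h`.
-/

open Subgroup

theorem MulAut.inv_apply_eq_conj_of_forall_apply_eq_conj {G : Type*} [Group G] (θ : MulAut G)
    (u : G) (hu : ∀ h, θ h * h⁻¹ ∈ center G → θ h = u⁻¹ * h * u) {h : G}
    (hh : θ h * h⁻¹ ∈ center G) : θ⁻¹ h = u * h * u⁻¹ := by
  set z := θ h * h⁻¹ with hz
  have hconj : u * h * u⁻¹ = z⁻¹ * h := by
    rw [eq_inv_mul_iff_mul_eq]
    calc z * (u * h * u⁻¹) = u * z * h * u⁻¹ := by rw [mem_center_iff.mp hh u]; group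
      _ = h := by rw [hz, hu h hh]; group
  have hθz : θ z ∈ center G := MulEquivClass.apply_mem_center θ hh
  have hmem : θ (u * h * u⁻¹) * (u * h * u⁻¹)⁻¹ ∈ center G := by
    have : θ (z⁻¹ * h) * (z⁻¹ * h)⁻¹ = (θ z)⁻¹ * z * z := by
      rw [map_mul, map_inv, hz]; group
    rw [hconj, this]
    exact mul_mem (mul_mem (inv_mem hθz) hh) hh
  rw [MulAut.inv_def, MulEquiv.symm_apply_eq, hu _ hmem]
  group

namespace QuaternionGroup

variable {n : ℕ}

theorem a_eq_a_one_pow [NeZero n] (m : ZMod (2 * n)) : a m = (a 1 : QuaternionGroup n) ^ m.val := by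
  rw [a_one_pow, ZMod.natCast_zmod_val]

theorem xa_eq_xa_zero_mul_a (m : ZMod (2 * n)) : xa m = xa 0 * (a m : QuaternionGroup n) := by
  rw [xa_mul_a, zero_add]

def ofGenImages {M : Type*} [Monoid M] (x y : M) : QuaternionGroup n → M
  | a m => x ^ m.val
  | xa m => y * x ^ m.val

theorem apply_eq_ofGenImages [NeZero n] {M F : Type*} [Monoid M] [FunLike F (QuaternionGroup n) M]
    [MonoidHomClass F (QuaternionGroup n) M] (f : F) (h : QuaternionGroup n) :
    f h = ofGenImages (f (a 1)) (f (xa 0)) h := by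
  cases h with
  | a m => rw [ofGenImages, ← map_pow, ← a_eq_a_one_pow]
  | xa m => rw [ofGenImages, ← map_pow, ← map_mul, ← a_eq_a_one_pow, ← xa_eq_xa_zero_mul_a]

theorem exists_conj_of_not_commute :
    ∀ x y : QuaternionGroup 2, x * y ≠ y * x → ∃ u, ∀ h,
      ofGenImages x y h * h⁻¹ ∈ center (QuaternionGroup 2) → ofGenImages x y h = u⁻¹ * h * u := by
  decide

end QuaternionGroup

open QuaternionGroup in
/-- For every automorphism `θ` of `Q₈` there is `u ∈ Q₈` such that for all `h`
with `θ(h)h⁻¹` central, one has `θ(h) = u⁻¹hu` and `θ⁻¹(h) = uhu⁻¹`. -/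
theorem q8_automorphism_partially_inner (θ : MulAut (QuaternionGroup 2)) :
    ∃ u : QuaternionGroup 2, ∀ h : QuaternionGroup 2,
      θ h * h⁻¹ ∈ Subgroup.center (QuaternionGroup 2) →
        θ h = u⁻¹ * h * u ∧ θ⁻¹ h = u * h * u⁻¹ := by
  have hgen : θ (a 1) * θ (xa 0) ≠ θ (xa 0) * θ (a 1) := by
    simpa only [← map_mul, θ.injective.ne_iff] using
      (by decide : (a 1 : QuaternionGroup 2) * xa 0 ≠ xa 0 * a 1)
  obtain ⟨u, hu⟩ := exists_conj_of_not_commute _ _ hgen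
  have hθ : ∀ h, θ h * h⁻¹ ∈ center (QuaternionGroup 2) → θ h = u⁻¹ * h * u := by
    simpa only [← apply_eq_ofGenImages] using hu
  exact ⟨u, fun h hh => ⟨hθ h hh, θ.inv_apply_eq_conj_of_forall_apply_eq_conj u hθ hh⟩⟩
end

section
/- Let P and Q be nontrivial finite p-groups with central subgroups Z_P ≤ Z(P) and Z_Q ≤ Z(Q) of order p, and φ : Z_P → Z_Q an isomorphism. Then the center of the central product P *_φ Q = (P × Q)/{(z, φ(z)^{-1}) : z ∈ Z_P} equals the image of Z(P) × Z(Q); it is cyclic if and only if both Z(P) and Z(Q) are cyclic and at least one of them has order p. -/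
/-!
Because `N` meets `P × 1` and `1 × Q` trivially, a class `(a, b) N` commutes with `(g, 1) N` only
if `a` commutes with `g`, so the center of the quotient is the image of `Z(P) × Z(Q)`: a quotient
of `Z(P) × Z(Q)` by a subgroup of order `p` into which both factors embed. If it is cyclic, so are
both factors, and its order `|Z(P)| |Z(Q)| / p` divides the exponent `max |Z(P)| |Z(Q)|` of
`Z(P) × Z(Q)`, which forces the smaller factor to have order `p`. Conversely, if `|Z(P)| = p`, the
injective image of `Z(Q)` has the same order as the center, so the center is cyclic.
-/

open Subgroup MonoidHom

section ProdHom

variable {A B C : Type*} [Group A] [Group B] [Group C] (f : A × B →* C)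

theorem MonoidHom.card_range_mul_card_ker_prod :
    Nat.card f.range * Nat.card f.ker = Nat.card A * Nat.card B := by
  rw [← index_ker, mul_comm, card_mul_index, Nat.card_prod]

theorem MonoidHom.range_comp_inr_eq_range [Finite A] [Finite B]
    (hinr : Function.Injective (f.comp (inr A B))) (hker : Nat.card f.ker = Nat.card A) :
    (f.comp (inr A B)).range = f.range := by
  have : Finite f.range := Finite.of_surjective _ f.rangeRestrict_surjective
  refine eq_of_le_of_card_ge (by rw [range_comp]; exact map_le_range _ _) (le_of_eq ?_)
  have hcard := f.card_range_mul_card_ker_prod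
  rw [hker, mul_comm (Nat.card A)] at hcard
  rw [Nat.eq_of_mul_eq_mul_right Nat.card_pos hcard]
  exact Nat.card_congr (ofInjective hinr).toEquiv

theorem MonoidHom.range_comp_inl_eq_range [Finite A] [Finite B]
    (hinl : Function.Injective (f.comp (inl A B))) (hker : Nat.card f.ker = Nat.card B) :
    (f.comp (inl A B)).range = f.range := by
  have : Finite f.range := Finite.of_surjective _ f.rangeRestrict_surjective
  refine eq_of_le_of_card_ge (by rw [range_comp]; exact map_le_range _ _) (le_of_eq ?_)
  have hcard := f.card_range_mul_card_ker_prod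
  rw [hker] at hcard
  rw [Nat.eq_of_mul_eq_mul_right Nat.card_pos hcard]
  exact Nat.card_congr (ofInjective hinl).toEquiv

theorem MonoidHom.card_eq_prime_of_isCyclic_range {p : ℕ} [hp : Fact p.Prime] [Finite A] [Finite B]
    [Nontrivial A] [Nontrivial B] (hA : IsPGroup p A) (hB : IsPGroup p B)
    [IsCyclic A] [IsCyclic B] [IsCyclic f.range] (hker : Nat.card f.ker = p) :
    Nat.card A = p ∨ Nat.card B = p := by
  obtain ⟨m, hm⟩ := hA.exists_card_eq
  obtain ⟨n, hn⟩ := hB.exists_card_eq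
  have hm0 : m ≠ 0 := by
    rintro rfl
    exact (Finite.one_lt_card (α := A)).ne' (by rw [hm, pow_zero])
  have hn0 : n ≠ 0 := by
    rintro rfl
    exact (Finite.one_lt_card (α := B)).ne' (by rw [hn, pow_zero])
  have hexp : Nat.card f.range ∣ p ^ max m n := by
    rw [← IsCyclic.exponent_eq_card]
    calc Monoid.exponent f.range ∣ Monoid.exponent (A × B) :=
          MonoidHom.exponent_dvd f.rangeRestrict_surjective
      _ = lcm (Monoid.exponent A) (Monoid.exponent B) := Monoid.exponent_prod
      _ ∣ p ^ max m n := by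
          rw [IsCyclic.exponent_eq_card, IsCyclic.exponent_eq_card, hm, hn]
          exact lcm_dvd (pow_dvd_pow p (le_max_left m n)) (pow_dvd_pow p (le_max_right m n))
  have hdvd : p ^ (m + n) ∣ p ^ (max m n + 1) := by
    rw [pow_add, pow_succ, ← hm, ← hn, ← f.card_range_mul_card_ker_prod, hker]
    exact mul_dvd_mul_right hexp p
  have hle := (Nat.pow_dvd_pow_iff_le_right hp.out.one_lt).mp hdvd
  rcases Nat.le_total m n with h | h
  · left; rw [hm, show m = 1 by omega, pow_one]
  · right; rw [hn, show n = 1 by omega, pow_one]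

theorem MonoidHom.isCyclic_range_prod_iff {p : ℕ} [Fact p.Prime] [Finite A] [Finite B]
    [Nontrivial A] [Nontrivial B] (hA : IsPGroup p A) (hB : IsPGroup p B)
    (hinl : Function.Injective (f.comp (inl A B))) (hinr : Function.Injective (f.comp (inr A B)))
    (hker : Nat.card f.ker = p) :
    IsCyclic f.range ↔ IsCyclic A ∧ IsCyclic B ∧ (Nat.card A = p ∨ Nat.card B = p) := by
  constructor
  · intro hcyc
    have : IsCyclic A := isCyclic_of_injective (f.rangeRestrict.comp (inl A B))
      fun x y hxy ↦ hinl (congrArg Subtype.val hxy)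
    have : IsCyclic B := isCyclic_of_injective (f.rangeRestrict.comp (inr A B))
      fun x y hxy ↦ hinr (congrArg Subtype.val hxy)
    exact ⟨‹_›, ‹_›, f.card_eq_prime_of_isCyclic_range hA hB hker⟩
  · rintro ⟨hAcyc, hBcyc, hcard | hcard⟩
    · rw [← f.range_comp_inr_eq_range hinr (hker.trans hcard.symm)]
      exact isCyclic_of_surjective _ (f.comp (inr A B)).rangeRestrict_surjective
    · rw [← f.range_comp_inl_eq_range hinl (hker.trans hcard.symm)]
      exact isCyclic_of_surjective _ (f.comp (inl A B)).rangeRestrict_surjective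

end ProdHom

section QuotientProd

variable {G H : Type*} [Group G] [Group H] (N : Subgroup (G × H)) [N.Normal]

theorem fst_mem_center_of_mk_mem_center (hN : ∀ g : G, (g, 1) ∈ N → g = 1) {x : G × H}
    (hx : (x : (G × H) ⧸ N) ∈ center ((G × H) ⧸ N)) : x.1 ∈ center G := by
  obtain ⟨a, b⟩ := x
  refine mem_center_iff.mpr fun g ↦ ?_
  have hcomm := mem_center_iff.mp hx ((g, 1) : G × H)
  rw [← QuotientGroup.mk_mul, ← QuotientGroup.mk_mul, QuotientGroup.eq] at hcomm
  simp only [Prod.mk_mul_mk, Prod.inv_mk, one_mul, mul_one, inv_mul_cancel] at hcomm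
  exact inv_mul_eq_one.mp (hN _ hcomm)

theorem snd_mem_center_of_mk_mem_center (hN : ∀ h : H, (1, h) ∈ N → h = 1) {x : G × H}
    (hx : (x : (G × H) ⧸ N) ∈ center ((G × H) ⧸ N)) : x.2 ∈ center H := by
  obtain ⟨a, b⟩ := x
  refine mem_center_iff.mpr fun h ↦ ?_
  have hcomm := mem_center_iff.mp hx ((1, h) : G × H)
  rw [← QuotientGroup.mk_mul, ← QuotientGroup.mk_mul, QuotientGroup.eq] at hcomm
  simp only [Prod.mk_mul_mk, Prod.inv_mk, one_mul, mul_one, inv_mul_cancel] at hcomm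
  exact inv_mul_eq_one.mp (hN _ hcomm)

theorem center_quotient_prod_eq_map (hN₁ : ∀ g : G, (g, 1) ∈ N → g = 1)
    (hN₂ : ∀ h : H, (1, h) ∈ N → h = 1) :
    center ((G × H) ⧸ N) = map (QuotientGroup.mk' N) ((center G).prod (center H)) := by
  refine le_antisymm ?_ ?_
  · intro q hq
    obtain ⟨x, rfl⟩ := QuotientGroup.mk_surjective q
    exact ⟨x, ⟨fst_mem_center_of_mk_mem_center N hN₁ hq,
      snd_mem_center_of_mk_mem_center N hN₂ hq⟩, rfl⟩
  · rintro _ ⟨x, hx, rfl⟩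
    rw [← Subgroup.center_prod] at hx
    refine mem_center_iff.mpr fun q ↦ ?_
    induction q using QuotientGroup.induction_on with
    | H y => exact congrArg (QuotientGroup.mk' N) (mem_center_iff.mp hx y)

def Subgroup.prodToQuotient (K : Subgroup G) (L : Subgroup H) : K × L →* (G × H) ⧸ N :=
  (QuotientGroup.mk' N).comp (K.subtype.prodMap L.subtype)

variable (K : Subgroup G) (L : Subgroup H)

theorem Subgroup.range_prodToQuotient :
    (N.prodToQuotient K L).range = map (QuotientGroup.mk' N) (K.prod L) := by
  rw [prodToQuotient, range_comp, range_prodMap, range_subtype, range_subtype]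

theorem Subgroup.card_ker_prodToQuotient (hNKL : N ≤ K.prod L) :
    Nat.card (N.prodToQuotient K L).ker = Nat.card N := by
  have hinj : Function.Injective (K.subtype.prodMap L.subtype) :=
    K.subtype_injective.prodMap L.subtype_injective
  rw [prodToQuotient, ← comap_ker, QuotientGroup.ker_mk', ← card_map_of_injective hinj,
    map_comap_eq_self (by rwa [range_prodMap, range_subtype, range_subtype])]

theorem Subgroup.prodToQuotient_comp_inl_injective (hN : ∀ g : G, (g, 1) ∈ N → g = 1) :
    Function.Injective ((N.prodToQuotient K L).comp (inl K L)) := by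
  refine (injective_iff_map_eq_one _).mpr fun k hk ↦ Subtype.ext ?_
  exact hN k ((QuotientGroup.eq_one_iff _).mp hk)

theorem Subgroup.prodToQuotient_comp_inr_injective (hN : ∀ h : H, (1, h) ∈ N → h = 1) :
    Function.Injective ((N.prodToQuotient K L).comp (inr K L)) := by
  refine (injective_iff_map_eq_one _).mpr fun l hl ↦ Subtype.ext ?_
  exact hN l ((QuotientGroup.eq_one_iff _).mp hl)

end QuotientProd

section Antidiagonal

variable {P Q : Type*} [Group P] [Group Q] {ZP : Subgroup P} {ZQ : Subgroup Q}

def antidiagonalHom (hZQ : ZQ ≤ center Q) (φ : ZP ≃* ZQ) : ZP →* P × Q :=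
  MonoidHom.mk' (fun z ↦ ((z : P), ((φ z : Q))⁻¹)) fun z w ↦ by
    ext
    · rfl
    · simp only [map_mul, coe_mul, Prod.snd_mul]
      rw [← mem_center_iff.mp (hZQ (φ z).2), mul_inv_rev]

variable (hZQ : ZQ ≤ center Q) (φ : ZP ≃* ZQ)

theorem closure_antidiagonal_eq_range :
    closure {x : P × Q | ∃ z : ZP, x = ((z : P), ((φ z : Q))⁻¹)} =
      (antidiagonalHom hZQ φ).range := by
  have hset : {x : P × Q | ∃ z : ZP, x = ((z : P), ((φ z : Q))⁻¹)} =
      (antidiagonalHom hZQ φ).range := by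
    ext x
    exact exists_congr fun z ↦ eq_comm
  rw [hset, closure_eq]

theorem card_range_antidiagonalHom : Nat.card (antidiagonalHom hZQ φ).range = Nat.card ZP :=
  (Nat.card_congr (ofInjective (f := antidiagonalHom hZQ φ)
    fun _ _ hzw ↦ Subtype.ext (congrArg Prod.fst hzw)).toEquiv).symm

theorem eq_one_of_mk_one_mem_range_antidiagonalHom {g : P}
    (hg : (g, 1) ∈ (antidiagonalHom hZQ φ).range) : g = 1 := by
  obtain ⟨z, hz⟩ := hg
  have hφz : φ z = 1 := Subtype.ext (inv_eq_one.mp (congrArg Prod.snd hz))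
  have hzg : (z : P) = g := congrArg Prod.fst hz
  rw [← hzg, (map_eq_one_iff φ φ.injective).mp hφz, OneMemClass.coe_one]

theorem eq_one_of_one_mk_mem_range_antidiagonalHom {h : Q}
    (hh : (1, h) ∈ (antidiagonalHom hZQ φ).range) : h = 1 := by
  obtain ⟨z, hz⟩ := hh
  have hz1 : z = 1 := Subtype.ext (congrArg Prod.fst hz)
  have hzh : ((φ z : Q))⁻¹ = h := congrArg Prod.snd hz
  rw [← hzh, hz1, map_one, OneMemClass.coe_one, inv_one]

theorem range_antidiagonalHom_le_center_prod (hZP : ZP ≤ center P) :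
    (antidiagonalHom hZQ φ).range ≤ (center P).prod (center Q) := by
  rintro _ ⟨z, rfl⟩
  exact ⟨hZP z.2, (center Q).inv_mem (hZQ (φ z).2)⟩

end Antidiagonal

theorem center_of_central_product_general {p : ℕ} [Fact p.Prime]
    {P Q : Type*} [Group P] [Group Q] [Finite P] [Finite Q]
    [Nontrivial P] [Nontrivial Q]
    (hP : IsPGroup p P) (hQ : IsPGroup p Q)
    (ZP : Subgroup P) (ZQ : Subgroup Q)
    (hZP : ZP ≤ Subgroup.center P) (hZQ : ZQ ≤ Subgroup.center Q)
    (hZPcard : Nat.card ZP = p)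
    (φ : ZP ≃* ZQ)
    (N : Subgroup (P × Q)) [N.Normal]
    (hN : N = Subgroup.closure {x : P × Q | ∃ z : ZP, x = ((z : P), ((φ z : Q))⁻¹)}) :
    Subgroup.center ((P × Q) ⧸ N) =
      Subgroup.map (QuotientGroup.mk' N)
        ((Subgroup.center P).prod (Subgroup.center Q)) ∧
    (IsCyclic (Subgroup.center ((P × Q) ⧸ N)) ↔
      IsCyclic (Subgroup.center P) ∧ IsCyclic (Subgroup.center Q) ∧
        (Nat.card (Subgroup.center P) = p ∨ Nat.card (Subgroup.center Q) = p)) := by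
  rw [closure_antidiagonal_eq_range hZQ φ] at hN
  have hN₁ : ∀ g : P, (g, 1) ∈ N → g = 1 := fun g hg ↦
    eq_one_of_mk_one_mem_range_antidiagonalHom hZQ φ (hN ▸ hg)
  have hN₂ : ∀ h : Q, (1, h) ∈ N → h = 1 := fun h hh ↦
    eq_one_of_one_mk_mem_range_antidiagonalHom hZQ φ (hN ▸ hh)
  have hcenter := center_quotient_prod_eq_map N hN₁ hN₂
  refine ⟨hcenter, ?_⟩
  have hrange : (N.prodToQuotient (center P) (center Q)).range = center ((P × Q) ⧸ N) :=
    (N.range_prodToQuotient _ _).trans hcenter.symm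
  have hker : Nat.card (N.prodToQuotient (center P) (center Q)).ker = p := by
    rw [N.card_ker_prodToQuotient _ _ (hN ▸ range_antidiagonalHom_le_center_prod hZQ φ hZP), hN,
      card_range_antidiagonalHom, hZPcard]
  have := hP.center_nontrivial
  have := hQ.center_nontrivial
  rw [← hrange]
  exact isCyclic_range_prod_iff _ (hP.to_subgroup _) (hQ.to_subgroup _)
    (N.prodToQuotient_comp_inl_injective _ _ hN₁) (N.prodToQuotient_comp_inr_injective _ _ hN₂) hker

/-- Let `P, Q` be nontrivial finite `p`-groups, `Z_P ≤ Z(P)`, `Z_Q ≤ Z(Q)` of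
order `p`, and `φ : Z_P ≃* Z_Q`.  Let `N = {(z, φ(z)⁻¹) : z ∈ Z_P}`, so that
`P *_φ Q = (P × Q)/N` is the central product.  Then the center of `P *_φ Q` is
the image of `Z(P) × Z(Q)`, and it is cyclic iff both `Z(P)` and `Z(Q)` are
cyclic and at least one of them has order `p`. -/
theorem center_of_central_product {p : ℕ} [Fact p.Prime]
    {P Q : Type*} [Group P] [Group Q] [Finite P] [Finite Q]
    [Nontrivial P] [Nontrivial Q]
    (hP : IsPGroup p P) (hQ : IsPGroup p Q)
    (ZP : Subgroup P) (ZQ : Subgroup Q)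
    (hZP : ZP ≤ Subgroup.center P) (hZQ : ZQ ≤ Subgroup.center Q)
    (hZPcard : Nat.card ZP = p) (hZQcard : Nat.card ZQ = p)
    (φ : ZP ≃* ZQ)
    (N : Subgroup (P × Q)) [N.Normal]
    (hN : N = Subgroup.closure {x : P × Q | ∃ z : ZP, x = ((z : P), ((φ z : Q))⁻¹)}) :
    Subgroup.center ((P × Q) ⧸ N) =
      Subgroup.map (QuotientGroup.mk' N)
        ((Subgroup.center P).prod (Subgroup.center Q)) ∧
    (IsCyclic (Subgroup.center ((P × Q) ⧸ N)) ↔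
      IsCyclic (Subgroup.center P) ∧ IsCyclic (Subgroup.center Q) ∧
        (Nat.card (Subgroup.center P) = p ∨ Nat.card (Subgroup.center Q) = p)) :=
  center_of_central_product_general hP hQ ZP ZQ hZP hZQ hZPcard φ N hN
end

section
/- For every natural number n, the group (D_8)^n (the direct product of n copies of the dihedral group of order 8) has exactly 5^n conjugacy classes of cyclic subgroups. -/
/-!
If `x ^ 4 = 1`, the only generators of `⟨x⟩` are `x` and `x⁻¹`. In `D₈`, hence in `D₈ⁿ`, every
element is conjugate to its inverse, so `x ↦ ⟨x⟩` induces a bijection from conjugacy classes of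
elements onto conjugacy classes of cyclic subgroups. Conjugacy classes of a direct product are
tuples of conjugacy classes of the factors, and `D₈` has `5` of them.
-/

open scoped Pointwise

open Subgroup

section CyclicSubgroupClasses

variable {G : Type*} [Group G]

theorem ConjAct.smul_zpowers (g : ConjAct G) (x : G) :
    g • zpowers x = zpowers (g • x) := by
  simp [pointwise_smul_def, MonoidHom.map_zpowers]

def zpowersConjClass : ConjClasses G → Quotient (MulAction.orbitRel (ConjAct G) (Subgroup G)) :=
  Quotient.lift (fun x ↦ Quotient.mk _ (zpowers x)) fun x y hxy ↦ Quotient.sound <| by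
    obtain ⟨c, rfl⟩ := isConj_iff.mp hxy
    exact ⟨ConjAct.toConjAct c⁻¹, by simp [ConjAct.smul_zpowers, ConjAct.smul_def, mul_assoc]⟩

theorem exists_zpowersConjClass_eq_iff
    (c : Quotient (MulAction.orbitRel (ConjAct G) (Subgroup G))) :
    (∃ x, zpowersConjClass x = c) ↔ ∃ H : Subgroup G, IsCyclic H ∧
      Quotient.mk (MulAction.orbitRel (ConjAct G) (Subgroup G)) H = c := by
  constructor
  · rintro ⟨x, rfl⟩
    obtain ⟨x, rfl⟩ := ConjClasses.mk_surjective x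
    exact ⟨zpowers x, inferInstance, rfl⟩
  · rintro ⟨H, hH, rfl⟩
    obtain ⟨x, rfl⟩ := H.isCyclic_iff_exists_zpowers_eq_top.mp hH
    exact ⟨ConjClasses.mk x, rfl⟩

theorem zpowersConjClass_injective (h : ∀ x y : G, zpowers x = zpowers y → IsConj x y) :
    Function.Injective (zpowersConjClass (G := G)) := by
  intro x y hxy
  obtain ⟨x, rfl⟩ := ConjClasses.mk_surjective x
  obtain ⟨y, rfl⟩ := ConjClasses.mk_surjective y
  obtain ⟨g, hg⟩ := Quotient.exact hxy
  change g • zpowers y = zpowers x at hg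
  rw [ConjAct.smul_zpowers] at hg
  exact ConjClasses.mk_eq_mk_iff_isConj.mpr
    ((h _ _ hg).symm.trans (ConjAct.mem_orbit_conjAct.mp (MulAction.mem_orbit _ g)))

theorem card_cyclicSubgroupClasses_eq_card_conjClasses
    (h : ∀ x y : G, zpowers x = zpowers y → IsConj x y) :
    Nat.card {c : Quotient (MulAction.orbitRel (ConjAct G) (Subgroup G)) //
      ∃ H : Subgroup G, IsCyclic H ∧
        Quotient.mk (MulAction.orbitRel (ConjAct G) (Subgroup G)) H = c} =
      Nat.card (ConjClasses G) := by
  rw [← Nat.card_range_of_injective (zpowersConjClass_injective h)]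
  exact Nat.card_congr (Equiv.subtypeEquivRight fun c ↦ (exists_zpowersConjClass_eq_iff c).symm)

theorem eq_or_eq_inv_of_zpowers_eq {x y : G} (hx : x ^ 4 = 1)
    (hxy : zpowers x = zpowers y) : y = x ∨ y = x⁻¹ := by
  obtain ⟨m, rfl⟩ := mem_zpowers_iff.mp (hxy ▸ mem_zpowers y)
  obtain ⟨j, hj⟩ := mem_zpowers_iff.mp (hxy ▸ mem_zpowers x)
  rw [zpow_eq_zpow_emod' m hx] at hj ⊢
  have : 0 ≤ m % 4 := Int.emod_nonneg m (by norm_num)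
  have : m % 4 < 4 := Int.emod_lt_of_pos m (by norm_num)
  interval_cases m % 4
  · left; simpa using hj
  · left; simp
  · -- `x = (x²)ʲ` forces `x² = x⁴ʲ = 1`, so both generators are trivial.
    have hx2 : x ^ (2 : ℤ) = 1 :=
      calc x ^ (2 : ℤ) = ((x ^ (2 : ℤ)) ^ j) ^ (2 : ℤ) := by rw [hj]
        _ = (x ^ 4) ^ j := by rw [← zpow_natCast, ← zpow_mul, ← zpow_mul, ← zpow_mul]; ring_nf
        _ = 1 := by rw [hx, one_zpow]
    left; rw [hx2, ← hj, hx2, one_zpow]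
  · right
    exact eq_inv_of_mul_eq_one_left (by rw [← zpow_add_one]; exact_mod_cast hx)

theorem isConj_of_zpowers_eq (h4 : ∀ g : G, g ^ 4 = 1)
    (hinv : ∀ g : G, IsConj g g⁻¹) {x y : G} (hxy : zpowers x = zpowers y) : IsConj x y := by
  rcases eq_or_eq_inv_of_zpowers_eq (h4 x) hxy with rfl | rfl
  exacts [IsConj.refl _, hinv _]

end CyclicSubgroupClasses

theorem Pi.isConj_iff {ι : Type*} {G : ι → Type*} [∀ i, Group (G i)] {x y : ∀ i, G i} :
    IsConj x y ↔ ∀ i, IsConj (x i) (y i) := by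
  simp only [_root_.isConj_iff, funext_iff, Classical.skolem]
  rfl

noncomputable def ConjClasses.piEquiv {ι : Type*} {G : ι → Type*} [∀ i, Group (G i)] :
    ConjClasses (∀ i, G i) ≃ ∀ i, ConjClasses (G i) where
  toFun := Quotient.lift (fun x i ↦ ConjClasses.mk (x i)) fun _ _ h ↦
    funext fun i ↦ ConjClasses.mk_eq_mk_iff_isConj.mpr (Pi.isConj_iff.mp h i)
  invFun c := ConjClasses.mk fun i ↦ (c i).exists_rep.choose
  left_inv x := by
    obtain ⟨x, rfl⟩ := ConjClasses.mk_surjective x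
    exact ConjClasses.mk_eq_mk_iff_isConj.mpr <| Pi.isConj_iff.mpr fun i ↦
      ConjClasses.mk_eq_mk_iff_isConj.mp (ConjClasses.mk (x i)).exists_rep.choose_spec
  right_inv c := funext fun i ↦ (c i).exists_rep.choose_spec

theorem DihedralGroup.isConj_inv {n : ℕ} (g : DihedralGroup n) : IsConj g g⁻¹ := by
  cases g with
  | r i => exact isConj_iff.mpr ⟨sr 0, by simp [sr_mul_r, sr_mul_sr, inv_r]⟩
  | sr i => rw [inv_sr]

theorem DihedralGroup.pow_four_eq_one (g : DihedralGroup 4) : g ^ 4 = 1 := by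
  have : Monoid.exponent (DihedralGroup 4) = 4 := by rw [DihedralGroup.exponent]; rfl
  simpa [this] using Monoid.pow_exponent_eq_one g

theorem DihedralGroup.card_conjClasses_four : Nat.card (ConjClasses (DihedralGroup 4)) = 5 := by
  rw [Nat.card_eq_fintype_card]; decide

/-- The group `(D₈)ⁿ` has exactly `5ⁿ` conjugacy classes of cyclic
subgroups.  (Conjugacy classes of subgroups are the orbits of the conjugation
action of `G` on its subgroups.) -/
theorem card_cyclic_classes_D8_pow (n : ℕ) :
    Nat.card {c : Quotient (MulAction.orbitRel (ConjAct (Fin n → DihedralGroup 4))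
        (Subgroup (Fin n → DihedralGroup 4))) //
      ∃ H : Subgroup (Fin n → DihedralGroup 4), IsCyclic H ∧
        Quotient.mk (MulAction.orbitRel (ConjAct (Fin n → DihedralGroup 4))
          (Subgroup (Fin n → DihedralGroup 4))) H = c} = 5 ^ n := by
  have hpow (g : Fin n → DihedralGroup 4) : g ^ 4 = 1 :=
    funext fun i ↦ DihedralGroup.pow_four_eq_one (g i)
  have hinv (g : Fin n → DihedralGroup 4) : IsConj g g⁻¹ :=
    Pi.isConj_iff.mpr fun i ↦ DihedralGroup.isConj_inv (g i)
  rw [card_cyclicSubgroupClasses_eq_card_conjClasses fun _ _ ↦ isConj_of_zpowers_eq hpow hinv,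
    Nat.card_congr ConjClasses.piEquiv, Nat.card_pi, DihedralGroup.card_conjClasses_four]
  simp
end
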